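/- Fix a with 1 ≤ a ≤ n − 2, and let F and G be complete flags in V = ℂⁿ with F(b) = G(b) for every b ∉ {a, a+1}. Then there exist complete flags X and Y such that X(b) = F(b) for all b ≠ a+1, Y(b) = X(b) for all b ≠ a, and G(b) = Y(b) for all b ≠ a+1. (That is, G can be reached from F by a chain of single-position modifications following the word (a+1, a, a+1); geometrically, the projection f_{T'} from the Bott–Samelson variety of the flipped rhombic tiling T' to the hexagon-tile variety Z_{T_H} is surjective.) -/

import Mathlib

/-!
Since `F(a-1) = G(a-1)` has codimension one in both `F(a)` and `G(a)`, the sum `F(a) + G(a)` has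
dimension at most `a + 1`, and it lies in `F(a+2) = G(a+2)`. Any `W` of dimension `a + 1` between
them can replace `F(a+1)`, giving `X`; since `G(a) ≤ W`, replacing `X(a)` by `G(a)` gives a flag `Y`,
which differs from `G` only at `a + 1`.
-/

noncomputable section

/-- The coordinate subspace `span{e₁, …, e_k}` of `ℂⁿ` (standard basis `eᵢ = Pi.single i 1`). -/
def stdSub (n k : ℕ) : Submodule ℂ (Fin n → ℂ) :=
  Submodule.span ℂ {v : Fin n → ℂ | ∃ t : Fin n, (t : ℕ) < k ∧ v = Pi.single t 1}

/-- A complete flag in `ℂⁿ`: a monotone function `{0,…,n} → Submodule ℂ ℂⁿ`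
with `dim F(k) = k`. -/
def IsCompleteFlag (n : ℕ) (F : Fin (n + 1) → Submodule ℂ (Fin n → ℂ)) : Prop :=
  Monotone F ∧ ∀ k : Fin (n + 1), Module.finrank ℂ (F k) = (k : ℕ)

/-- The standard flag `E(k) = span{e₁, …, e_k}`. -/
def stdFlag (n : ℕ) : Fin (n + 1) → Submodule ℂ (Fin n → ℂ) := fun k => stdSub n (k : ℕ)

/-- Magyar's description of the Bott–Samelson set `BS^i` for a word `i = (i_1, …, i_m)`:
sequences of complete flags `(F^0, …, F^m)` with `F^0 = E` the standard flag, and for each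
`1 ≤ k ≤ m`, `F^k(a) = F^{k-1}(a)` for all `a ≠ i_k`.  (The word is indexed so that
`i ⟨k⟩` for `k : Fin m` is the letter `i_{k+1}`.) -/
def InBS (n m : ℕ) (i : Fin m → ℕ)
    (F : Fin (m + 1) → Fin (n + 1) → Submodule ℂ (Fin n → ℂ)) : Prop :=
  (∀ k, IsCompleteFlag n (F k)) ∧ F 0 = stdFlag n ∧
    ∀ k : Fin m, ∀ a : Fin (n + 1), (a : ℕ) ≠ i k → F k.succ a = F k.castSucc a

open Module Submodule

namespace Submodule

variable {K V : Type*} [Field K] [AddCommGroup V] [Module K V] [Module.Finite K V]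

theorem exists_finrank_eq_of_le {S T : Submodule K V} (hST : S ≤ T) {d : ℕ}
    (hSd : finrank K S ≤ d) (hdT : d ≤ finrank K T) :
    ∃ W : Submodule K V, S ≤ W ∧ W ≤ T ∧ finrank K W = d := by
  induction d, hSd using Nat.le_induction with
  | base => exact ⟨S, le_rfl, hST, rfl⟩
  | succ d _ ih =>
    obtain ⟨W, hSW, hWT, rfl⟩ := ih (by omega)
    obtain ⟨v, hvT, hvW⟩ := SetLike.exists_of_lt (lt_of_le_of_ne hWT (by rintro rfl; omega))
    exact ⟨W ⊔ span K {v}, le_sup_of_le_left hSW,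
      sup_le hWT ((span_singleton_le_iff_mem v T).2 hvT), finrank_sup_span_singleton hvW⟩

theorem finrank_sup_add_finrank_le_of_le_inf {A B C : Submodule K V} (hC : C ≤ A ⊓ B) :
    finrank K ↥(A ⊔ B) + finrank K C ≤ finrank K A + finrank K B := by
  rw [← finrank_sup_add_finrank_inf_eq A B]
  exact Nat.add_le_add_left (finrank_mono hC) _

end Submodule

theorem IsCompleteFlag.update {n : ℕ} {F : Fin (n + 1) → Submodule ℂ (Fin n → ℂ)}
    (hF : IsCompleteFlag n F) (k : Fin (n + 1)) {W : Submodule ℂ (Fin n → ℂ)}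
    (hlo : ∀ j < k, F j ≤ W) (hhi : ∀ j, k < j → W ≤ F j) (hW : finrank ℂ W = k) :
    IsCompleteFlag n (Function.update F k W) := by
  refine ⟨fun i j hij => ?_, fun j => ?_⟩
  · rcases eq_or_ne i k with rfl | hik <;> rcases eq_or_ne j i with rfl | hji
    · exact le_rfl
    · simpa [hji] using hhi j (lt_of_le_of_ne hij hji.symm)
    · exact le_rfl
    · rcases eq_or_ne j k with rfl | hjk
      · simpa [hik] using hlo i (lt_of_le_of_ne hij hik)
      · simpa [hik, hjk] using hF.1 hij
  · rcases eq_or_ne j k with rfl | hjk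
    · rwa [Function.update_self]
    · rw [Function.update_of_ne hjk]; exact hF.2 j

theorem IsCompleteFlag.finrank_sup_le {n : ℕ} {F G : Fin (n + 1) → Submodule ℂ (Fin n → ℂ)}
    (hF : IsCompleteFlag n F) (hG : IsCompleteFlag n G) {p q : Fin (n + 1)}
    (hpq : (p : ℕ) + 1 = q) (hFG : F p = G p) :
    finrank ℂ ↥(F q ⊔ G q) ≤ q + 1 := by
  have := finrank_sup_add_finrank_le_of_le_inf
    (le_inf (hF.1 (by omega : p ≤ q)) (hFG ▸ hG.1 (by omega : p ≤ q)))
  rw [hF.2, hF.2, hG.2] at this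
  omega

theorem stmt6 (n : ℕ) (a : ℕ) (ha1 : 1 ≤ a) (ha2 : a ≤ n - 2)
    (F G : Fin (n + 1) → Submodule ℂ (Fin n → ℂ))
    (hF : IsCompleteFlag n F) (hG : IsCompleteFlag n G)
    (hFG : ∀ b : Fin (n + 1), (b : ℕ) ≠ a → (b : ℕ) ≠ a + 1 → F b = G b) :
    ∃ X Y : Fin (n + 1) → Submodule ℂ (Fin n → ℂ),
      IsCompleteFlag n X ∧ IsCompleteFlag n Y ∧
      (∀ b : Fin (n + 1), (b : ℕ) ≠ a + 1 → X b = F b) ∧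
      (∀ b : Fin (n + 1), (b : ℕ) ≠ a → Y b = X b) ∧
      (∀ b : Fin (n + 1), (b : ℕ) ≠ a + 1 → G b = Y b) := by
  obtain ⟨p, hp⟩ : ∃ p : Fin (n + 1), (p : ℕ) = a - 1 := ⟨⟨a - 1, by omega⟩, rfl⟩
  obtain ⟨q, hq⟩ : ∃ q : Fin (n + 1), (q : ℕ) = a := ⟨⟨a, by omega⟩, rfl⟩
  obtain ⟨r, hr⟩ : ∃ r : Fin (n + 1), (r : ℕ) = a + 1 := ⟨⟨a + 1, by omega⟩, rfl⟩
  obtain ⟨s, hs⟩ : ∃ s : Fin (n + 1), (s : ℕ) = a + 2 := ⟨⟨a + 2, by omega⟩, rfl⟩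
  have hFG' : ∀ j, j ≠ q → j ≠ r → F j = G j := fun j hjq hjr => hFG j (by omega) (by omega)
  obtain ⟨W, hW_lo, hW_hi, hW⟩ := exists_finrank_eq_of_le
    (sup_le (hF.1 (by omega : q ≤ s)) (hFG' s (by omega) (by omega) ▸ hG.1 (by omega : q ≤ s)))
    (hF.finrank_sup_le hG (by omega) (hFG' p (by omega) (by omega))) (by rw [hF.2]; omega)
  have hX := hF.update r (fun j hj => (hF.1 (by omega : j ≤ q)).trans (le_sup_left.trans hW_lo))
    (fun j hj => hW_hi.trans (hF.1 (by omega : s ≤ j))) (by omega)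
  have hY := hX.update q (W := G q)
    (fun j hj => by
      rw [Function.update_of_ne (by omega), hFG' j (by omega) (by omega)]
      exact hG.1 hj.le)
    (fun j hj => by
      rcases eq_or_ne j r with rfl | hjr
      · rw [Function.update_self]; exact le_sup_right.trans hW_lo
      · rw [Function.update_of_ne hjr, hFG' j (by omega) hjr]
        exact hG.1 hj.le)
    (hG.2 q)
  refine ⟨_, _, hX, hY, fun b hb => Function.update_of_ne (by omega) _ _,
    fun b hb => Function.update_of_ne (by omega) _ _, fun b hb => ?_⟩
  rcases eq_or_ne b q with rfl | hbq
  · rw [Function.update_self]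
  · rw [Function.update_of_ne hbq, Function.update_of_ne (by omega), hFG' b hbq (by omega)]
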